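/- A group acting properly by automorphisms on a CAT(0) cube complex of finite dimension has the Haagerup property. -/

import Mathlib

/-!
The walls form the coordinates of the Hilbert space `ℓ²(Wl)`, on which `G` acts by permuting
coordinates. The vector `b g` recording, with a sign, the walls separating `x₀` from `g • x₀` is a
1-cocycle for this representation, because separating walls are additive along
`x₀, g • x₀, gh • x₀` and the action carries walls between `x₀, h • x₀` to walls between
`g • x₀, gh • x₀`. Since `‖b g‖²` is the number of walls separating `x₀` from `g • x₀`,
properness of the action for the wall metric is properness of the affine action `v ↦ g • v + b g`.
-/

open Set

/-- The Haagerup property: the group admits a proper affine isometric action on a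
real Hilbert space. -/
def HasHaagerupProperty (G : Type*) [Group G] : Prop :=
  ∃ (H : Type) (_ : NormedAddCommGroup H) (_ : InnerProductSpace ℝ H) (_ : CompleteSpace H)
    (α : G → H → H),
    (∀ g, Isometry (α g)) ∧
    (∀ g h x, α (g * h) x = α g (α h x)) ∧
    (∀ x, α 1 x = x) ∧
    (∀ M : ℝ, {g : G | dist (α g 0) 0 ≤ M}.Finite)

/-- Two walls cross if all four intersections of their half-spaces are nonempty. -/
def WallsCross {X Wl : Type} (side : Wl → X → Bool) (w w' : Wl) : Prop :=
  ∀ b b' : Bool, ∃ x : X, side w x = b ∧ side w' x = b'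

open scoped ENNReal

theorem Memℓp.comp_equiv {ι ι' E : Type*} [NormedAddCommGroup E] {p : ℝ≥0∞} {f : ι' → E}
    (hf : Memℓp f p) (σ : ι ≃ ι') : Memℓp (f ∘ σ) p := by
  rcases p.trichotomy with rfl | rfl | hp
  · exact memℓp_zero (hf.finite_dsupport.preimage σ.injective.injOn)
  · rw [memℓp_infty_iff]
    exact σ.surjective.range_comp (fun i => ‖f i‖) ▸ hf.bddAbove
  · exact memℓp_gen ((σ.summable_iff (f := fun i => ‖f i‖ ^ p.toReal)).2 (hf.summable hp))

namespace lp

variable {ι ι' 𝕜 E : Type*} [NormedField 𝕜] [NormedAddCommGroup E] [NormedSpace 𝕜 E]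
  {p : ℝ≥0∞} [Fact (1 ≤ p)]

variable (𝕜 E p) in
def compEquiv (σ : ι ≃ ι') : lp (fun _ : ι' => E) p ≃ₗᵢ[𝕜] lp (fun _ : ι => E) p where
  toFun f := ⟨f ∘ σ, (lp.memℓp f).comp_equiv σ⟩
  invFun f := ⟨f ∘ σ.symm, (lp.memℓp f).comp_equiv σ.symm⟩
  map_add' _ _ := rfl
  map_smul' _ _ := rfl
  left_inv f := by ext; simp
  right_inv f := by ext; simp
  norm_map' f := by
    rcases p.dichotomy with rfl | hp
    · exact σ.iSup_comp (g := fun i => ‖f i‖)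
    · have hp : 0 < p.toReal := zero_lt_one.trans_le hp
      simp only [norm_eq_tsum_rpow hp]
      congr 1
      exact σ.tsum_eq fun i => ‖f i‖ ^ p.toReal

variable (𝕜 E p) in
def permRepresentation : Equiv.Perm ι →* (lp (fun _ : ι => E) p ≃ₗᵢ[𝕜] lp (fun _ : ι => E) p) where
  toFun σ := compEquiv 𝕜 E p σ⁻¹
  map_one' := rfl
  map_mul' _ _ := rfl

@[simp]
theorem permRepresentation_apply (σ : Equiv.Perm ι) (f : lp (fun _ : ι => E) p) (i : ι) :
    permRepresentation 𝕜 E p σ f i = f (σ⁻¹ i) := rfl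

end lp

theorem HasHaagerupProperty.of_proper_cocycle {G H : Type} [Group G] [NormedAddCommGroup H]
    [InnerProductSpace ℝ H] [CompleteSpace H] (L : G →* (H ≃ₗᵢ[ℝ] H)) (b : G → H)
    (hb : ∀ g h, b (g * h) = L g (b h) + b g) (hproper : ∀ M : ℝ, {g | ‖b g‖ ≤ M}.Finite) :
    HasHaagerupProperty G := by
  have hb_one : b 1 = 0 := by simpa using hb 1 1
  refine ⟨H, inferInstance, inferInstance, inferInstance, fun g v => L g v + b g,
    fun g => (IsometryEquiv.addRight (b g)).isometry.comp (L g).isometry, ?_, ?_, ?_⟩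
  · intro g h v
    simp only [hb, map_mul, LinearIsometryEquiv.coe_mul, Function.comp_apply, map_add]
    abel
  · simp [hb_one]
  · simpa using hproper

section WallSpace

variable {X Wl : Type*} (side : Wl → X → Bool)

def halfSpaceDiff (x y : X) (w : Wl) : ℝ := (side w y).toNat - (side w x).toNat

theorem halfSpaceDiff_add (x y z : X) (w : Wl) :
    halfSpaceDiff side x y w + halfSpaceDiff side y z w = halfSpaceDiff side x z w :=
  sub_add_sub_cancel' _ _ _

theorem halfSpaceDiff_perm {σ : Equiv.Perm Wl} {τ : Equiv.Perm X}
    (h : ∀ w x, side (σ w) (τ x) = side w x) (x y : X) (w : Wl) :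
    halfSpaceDiff side (τ x) (τ y) (σ w) = halfSpaceDiff side x y w := by
  simp only [halfSpaceDiff, h]

theorem halfSpaceDiff_ne_zero_iff {x y : X} {w : Wl} :
    halfSpaceDiff side x y w ≠ 0 ↔ side w x ≠ side w y := by
  cases hx : side w x <;> cases hy : side w y <;> simp [halfSpaceDiff, hx, hy]

theorem norm_halfSpaceDiff_rpow {r : ℝ} (hr : 0 < r) (x y : X) (w : Wl) :
    ‖halfSpaceDiff side x y w‖ ^ r = if side w x ≠ side w y then 1 else 0 := by
  cases hx : side w x <;> cases hy : side w y <;> simp [halfSpaceDiff, hx, hy, hr.ne']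

theorem memℓp_halfSpaceDiff {x y : X} (h : {w | side w x ≠ side w y}.Finite) (p : ℝ≥0∞) :
    Memℓp (halfSpaceDiff side x y) p :=
  (memℓp_zero (by simpa only [halfSpaceDiff_ne_zero_iff] using h)).of_exponent_ge zero_le

def halfSpaceDiffLp (p : ℝ≥0∞) {x y : X} (h : {w | side w x ≠ side w y}.Finite) :
    lp (fun _ : Wl => ℝ) p :=
  ⟨halfSpaceDiff side x y, memℓp_halfSpaceDiff side h p⟩

@[simp]
theorem halfSpaceDiffLp_apply (p : ℝ≥0∞) {x y : X} (h : {w | side w x ≠ side w y}.Finite)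
    (w : Wl) : halfSpaceDiffLp side p h w = halfSpaceDiff side x y w := rfl

theorem norm_halfSpaceDiffLp_rpow {p : ℝ≥0∞} [Fact (1 ≤ p)] (hp : 0 < p.toReal) {x y : X}
    (h : {w | side w x ≠ side w y}.Finite) :
    ‖halfSpaceDiffLp side p h‖ ^ p.toReal = {w | side w x ≠ side w y}.ncard := by
  classical
  rw [lp.norm_rpow_eq_tsum hp, ncard_eq_toFinset_card _ h]
  simp only [halfSpaceDiffLp_apply, norm_halfSpaceDiff_rpow side hp]
  rw [tsum_eq_sum (s := h.toFinset) fun w hw => by simpa using hw, Finset.sum_boole]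
  congr
  ext w
  simp

theorem halfSpaceDiff_orbit_mul {G : Type*} [Group G] (ρ : G →* Equiv.Perm X)
    (π : G →* Equiv.Perm Wl) (hcompat : ∀ g w x, side (π g w) (ρ g x) = side w x)
    (x₀ : X) (g h : G) (w : Wl) :
    halfSpaceDiff side x₀ (ρ (g * h) x₀) w =
      halfSpaceDiff side x₀ (ρ h x₀) ((π g)⁻¹ w) + halfSpaceDiff side x₀ (ρ g x₀) w :=
  calc halfSpaceDiff side x₀ (ρ (g * h) x₀) w
      = halfSpaceDiff side (ρ g x₀) (ρ g (ρ h x₀)) w + halfSpaceDiff side x₀ (ρ g x₀) w := by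
        rw [add_comm, halfSpaceDiff_add, map_mul, Equiv.Perm.mul_apply]
    _ = halfSpaceDiff side x₀ (ρ h x₀) ((π g)⁻¹ w) + halfSpaceDiff side x₀ (ρ g x₀) w := by
        rw [← halfSpaceDiff_perm side (hcompat g) x₀ (ρ h x₀), Equiv.Perm.inv_def,
          Equiv.apply_symm_apply]

end WallSpace

theorem haagerup_of_proper_action_on_finite_dim_cube_complex_general
    {G : Type} [Group G] {X Wl : Type} (side : Wl → X → Bool)
    (hfin : ∀ x y : X, {w : Wl | side w x ≠ side w y}.Finite)
    (ρ : G →* Equiv.Perm X) (π : G →* Equiv.Perm Wl)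
    (hcompat : ∀ (g : G) (w : Wl) (x : X), side (π g w) (ρ g x) = side w x)
    (x₀ : X)
    (hproper : ∀ n : ℕ, {g : G | {w : Wl | side w x₀ ≠ side w (ρ g x₀)}.ncard ≤ n}.Finite) :
    HasHaagerupProperty G := by
  set b : G → lp (fun _ : Wl => ℝ) 2 := fun g => halfSpaceDiffLp side 2 (hfin x₀ (ρ g x₀))
  refine HasHaagerupProperty.of_proper_cocycle ((lp.permRepresentation ℝ ℝ 2).comp π) b
    (fun g h => ?_) (fun M => (hproper ⌈M ^ 2⌉₊).subset fun g hg => ?_)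
  · ext w
    exact halfSpaceDiff_orbit_mul side ρ π hcompat x₀ g h w
  · have hcard := norm_halfSpaceDiffLp_rpow side (p := 2) (by norm_num) (hfin x₀ (ρ g x₀))
    rw [ENNReal.toReal_ofNat, Real.rpow_two] at hcard
    have hle : ({w | side w x₀ ≠ side w (ρ g x₀)}.ncard : ℝ) ≤ M ^ 2 :=
      hcard ▸ pow_le_pow_left₀ (norm_nonneg _) hg 2
    exact_mod_cast hle.trans (Nat.le_ceil _)

/-- A group acting properly on a finite-dimensional CAT(0) cube complex has the Haagerup
property.  The cube complex is encoded by its hyperplane/wall structure: a wall space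
`(X, Wl)` whose families of pairwise crossing walls have cardinality at most `D`
(finite dimension), on which `G` acts with the map `g ↦ g·x₀` proper with respect to the
wall (combinatorial) metric. -/
theorem haagerup_of_proper_action_on_finite_dim_cube_complex
    {G : Type} [Group G] [Countable G] {X Wl : Type} (side : Wl → X → Bool)
    (hne : ∀ w : Wl, (∃ x, side w x = true) ∧ (∃ x, side w x = false))
    (hfin : ∀ x y : X, {w : Wl | side w x ≠ side w y}.Finite)
    (D : ℕ)
    (hdim : ∀ S : Set Wl, S.Pairwise (WallsCross side) → S.Finite ∧ S.ncard ≤ D)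
    (ρ : G →* Equiv.Perm X) (π : G →* Equiv.Perm Wl)
    (hcompat : ∀ (g : G) (w : Wl) (x : X), side (π g w) (ρ g x) = side w x)
    (x₀ : X)
    (hproper : ∀ n : ℕ, {g : G | {w : Wl | side w x₀ ≠ side w (ρ g x₀)}.ncard ≤ n}.Finite) :
    HasHaagerupProperty G :=
  haagerup_of_proper_action_on_finite_dim_cube_complex_general side hfin ρ π hcompat x₀ hproper
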